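/- arXiv:1503.00329 — 2 statements merged into one kernel-verified Lean document; each statement's English description precedes it below -/
import Mathlib

section
/- Suppose G is a finite group acting on a complex vector space V, X is a subspace stabilized setwise by no conditions beyond the following: C_X = N_X/Z_X where N_X, Z_X are the setwise and pointwise stabilizers. If K ∈ 𝒜(X, C_X) is a reflecting hyperplane of C_X in X, given by K = Fix(ḡ) ∩ X for some g ∈ N_X whose fixed space in V is an intersection H_1 ∩ ⋯ ∩ H_m of reflecting hyperplanes of G, then K = H_i ∩ X for some i; consequently 𝒜(X, C_X) ⊆ 𝒜(V, G)^X. -/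
/-- If K is a reflecting hyperplane of C_X in X, i.e. K = Fix(g) ∩ X has codimension 1
in X with g ∈ G stabilizing X, and Fix(g) = H_1 ∩ ⋯ ∩ H_m is an intersection of
reflecting hyperplanes of G, then K = H_i ∩ X for some i. -/
theorem reflecting_hyperplane_of_CX_mem_restricted
    (V : Type*) [AddCommGroup V] [Module ℂ V] [FiniteDimensional ℂ V]
    (G : Subgroup (V ≃ₗ[ℂ] V)) [Finite G]
    (X K : Submodule ℂ V) (m : ℕ) (H : Fin m → Submodule ℂ V)
    (g : V ≃ₗ[ℂ] V) (hg : g ∈ G) (hgX : X.map g.toLinearMap = X)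
    (hrefl : ∀ i : Fin m, ∃ s : V ≃ₗ[ℂ] V, s ∈ G ∧
      LinearMap.ker (s.toLinearMap - LinearMap.id) = H i ∧
      Module.finrank ℂ ↥(H i) + 1 = Module.finrank ℂ V)
    (hfix : LinearMap.ker (g.toLinearMap - LinearMap.id) = ⨅ i, H i)
    (hK : K = LinearMap.ker (g.toLinearMap - LinearMap.id) ⊓ X)
    (hcodim : Module.finrank ℂ ↥K + 1 = Module.finrank ℂ ↥X) :
    ∃ i : Fin m, K = H i ⊓ X := by
  subst hK
  rw [hfix]
  have hne : ∃ i : Fin m, ¬ X ≤ H i := by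
    by_contra hall
    push_neg at hall
    have hX : X ≤ ⨅ i, H i := le_iInf hall
    have : (⨅ i, H i) ⊓ X = X := inf_eq_right.mpr hX
    rw [hfix, this] at hcodim
    omega
  obtain ⟨i, hi⟩ := hne
  refine ⟨i, ?_⟩
  have hle : (⨅ j, H j) ⊓ X ≤ H i ⊓ X := inf_le_inf_right X (iInf_le H i)
  have hlt : H i ⊓ X < X := lt_of_le_of_ne inf_le_right (fun h => hi (by
    rw [← h]; exact inf_le_left))
  have hrank : Module.finrank ℂ ↥(H i ⊓ X) < Module.finrank ℂ ↥X :=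
    Submodule.finrank_lt_finrank_of_lt hlt
  rw [hfix] at hcodim
  exact (Submodule.eq_of_le_of_finrank_le hle (by omega))
end

section
/- Let G = G(r,p,n) with multiset of exponents {r−1, 2r−1, …, (n−1)r−1, nr/p − 1}. Suppose r = ln and p = n for some l ≥ 1, and suppose λ = (i_1^{m_1}, …, i_c^{m_c}) is a partition of n with distinct parts i_1 > ⋯ > i_c such that m_1·l·gcd(n, i_1) − 1 belongs to the multiset {ln−1, ln−1, 2ln−1, …, (n−1)ln−1}. Then m_1·i_1 = n, i.e., c = 1. -/
/-- For G = G(ln, n, n): if λ = (i_1^{m_1},…,i_c^{m_c}) is a partition of n with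
distinct parts i_1 > ⋯ > i_c and m_1·l·gcd(n, i_1) − 1 is an exponent of G, i.e.
m_1·l·gcd(n, i_1) = q·l·n for some 1 ≤ q ≤ n − 1, then m_1·i_1 = n and c = 1. -/
theorem partition_single_part_of_exponent_condition
    (n l c : ℕ) (hn : 0 < n) (hl : 0 < l) (hc : 0 < c)
    (i m : Fin c → ℕ)
    (hipos : ∀ j, 0 < i j) (hmpos : ∀ j, 0 < m j)
    (hdec : ∀ j k : Fin c, j < k → i k < i j)
    (hsum : ∑ j, m j * i j = n)
    (hexp : ∃ q : ℕ, 1 ≤ q ∧ q ≤ n - 1 ∧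
      m ⟨0, hc⟩ * l * Nat.gcd n (i ⟨0, hc⟩) = q * l * n) :
    m ⟨0, hc⟩ * i ⟨0, hc⟩ = n ∧ c = 1 := by
  obtain ⟨q, hq1, hq2, heq⟩ := hexp
  set z : Fin c := ⟨0, hc⟩
  -- cancel l
  have h1 : m z * Nat.gcd n (i z) = q * n := by
    have h : l * (m z * Nat.gcd n (i z)) = l * (q * n) := by
      calc l * (m z * Nat.gcd n (i z)) = m z * l * Nat.gcd n (i z) := by ring
        _ = q * l * n := heq
        _ = l * (q * n) := by ring
    exact Nat.eq_of_mul_eq_mul_left hl h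
  have hle : m z * i z ≤ n := by
    rw [← hsum]
    exact Finset.single_le_sum (f := fun j => m j * i j) (fun j _ => Nat.zero_le _) (Finset.mem_univ z)
  have hg : Nat.gcd n (i z) ≤ i z := Nat.le_of_dvd (hipos z) (Nat.gcd_dvd_right _ _)
  have h2 : m z * Nat.gcd n (i z) ≤ m z * i z := Nat.mul_le_mul_left _ hg
  have h3 : n ≤ q * n := Nat.le_mul_of_pos_left n hq1
  have hmain : m z * i z = n := le_antisymm hle (by omega)
  refine ⟨hmain, ?_⟩
  by_contra hc1
  have hc2 : 1 < c := lt_of_le_of_ne hc (Ne.symm hc1)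
  have hrest : ∑ j ∈ Finset.univ.erase z, m j * i j = 0 := by
    have h4 := Finset.add_sum_erase Finset.univ (fun j => m j * i j) (Finset.mem_univ z)
    omega
  have hone : (⟨1, hc2⟩ : Fin c) ∈ Finset.univ.erase z := by
    simp [z, Fin.ext_iff]
  have := Finset.sum_eq_zero_iff.mp hrest _ hone
  have := Nat.mul_pos (hmpos ⟨1, hc2⟩) (hipos ⟨1, hc2⟩)
  omega
end
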